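/- Let M be a real n×n matrix. Suppose there exist a positive semidefinite real symmetric n×n matrix η and a positive definite real symmetric n×n matrix Q such that η = Q + M η Mᵀ. Then every complex eigenvalue λ of M satisfies |λ| < 1. -/

import Mathlib

open Matrix

private lemma quad_re_aux {n : ℕ} (R : Matrix (Fin n) (Fin n) ℝ) (v : Fin n → ℂ) :
    (star v ⬝ᵥ (R.map (Complex.ofReal)) *ᵥ v).re =
      (fun i => (v i).re) ⬝ᵥ R *ᵥ (fun i => (v i).re) +
      (fun i => (v i).im) ⬝ᵥ R *ᵥ (fun i => (v i).im) := by
  simp only [dotProduct, mulVec, Matrix.map_apply, Pi.star_apply, Finset.mul_sum,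
    Complex.re_sum, ← Finset.sum_add_distrib]
  refine Finset.sum_congr rfl fun i _ => Finset.sum_congr rfl fun j _ => ?_
  simp [Complex.mul_re, Complex.mul_im]

private lemma eigvec_transpose {n : ℕ} (A : Matrix (Fin n) (Fin n) ℂ) (μ : ℂ)
    (h : μ ∈ spectrum ℂ A) : ∃ v : Fin n → ℂ, v ≠ 0 ∧ Aᵀ *ᵥ v = μ • v := by
  have hT : μ ∈ spectrum ℂ Aᵀ := by
    rw [spectrum.mem_iff] at h ⊢
    intro hu; apply h
    rw [Matrix.isUnit_iff_isUnit_det] at hu ⊢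
    have e : (algebraMap ℂ (Matrix (Fin n) (Fin n) ℂ) μ - Aᵀ)
        = (algebraMap ℂ (Matrix (Fin n) (Fin n) ℂ) μ - A)ᵀ := by
      rw [transpose_sub]
      congr 1
      simp [Matrix.algebraMap_eq_diagonal]
    rw [e, det_transpose] at hu
    exact hu
  rw [← AlgEquiv.spectrum_eq (Matrix.toLinAlgEquiv' : Matrix (Fin n) (Fin n) ℂ ≃ₐ[ℂ] _),
    ← Module.End.hasEigenvalue_iff_mem_spectrum] at hT
  obtain ⟨v, hv⟩ := hT.exists_hasEigenvector
  refine ⟨v, hv.2, ?_⟩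
  have := hv.apply_eq_smul
  rwa [Matrix.toLinAlgEquiv'_apply] at this

/-- If the Lyapunov equation `η = Q + M * η * Mᵀ` has a
positive semidefinite solution `η` with `Q` positive definite, then every
complex eigenvalue of `M` has modulus `< 1`. -/
theorem stmt_1 {n : ℕ} (hn : 1 ≤ n) (M η Q : Matrix (Fin n) (Fin n) ℝ)
    (hη : η.PosSemidef) (hQ : Q.PosDef)
    (heq : η = Q + M * η * Mᵀ) :
    ∀ μ ∈ spectrum ℂ (M.map (Complex.ofReal)), ‖μ‖ < 1 := by
  intro μ hμ
  set A : Matrix (Fin n) (Fin n) ℂ := M.map Complex.ofReal with hA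
  obtain ⟨v, hv0, hvA⟩ := eigvec_transpose A μ hμ
  -- complexified matrices
  set ηc : Matrix (Fin n) (Fin n) ℂ := η.map Complex.ofReal with hηc
  set Qc : Matrix (Fin n) (Fin n) ℂ := Q.map Complex.ofReal with hQc
  -- complexified Lyapunov equation
  have heqc : ηc = Qc + A * ηc * Aᵀ := by
    have h : η.map (Complex.ofReal : ℝ → ℂ)
        = (Q + M * η * Mᵀ).map (Complex.ofReal : ℝ → ℂ) := by rw [← heq]
    rw [Matrix.map_add (Complex.ofReal : ℝ → ℂ) (by push_cast; simp)] at h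
    have hmul : (M * η * Mᵀ).map (Complex.ofReal : ℝ → ℂ) = A * ηc * Aᵀ := by
      show (M * η * Mᵀ).map (Complex.ofRealHom : ℝ →+* ℂ) = _
      rw [Matrix.map_mul, Matrix.map_mul, Matrix.transpose_map]
      rfl
    rw [hmul] at h
    exact h
  -- key scalar quantities
  set c : ℂ := star v ⬝ᵥ ηc *ᵥ v with hc
  set q : ℂ := star v ⬝ᵥ Qc *ᵥ v with hq
  -- A has real entries, so (Aᵀ)ᴴ = A
  have hAH : (Aᵀ)ᴴ = A := by
    ext i j
    simp [hA, conjTranspose_apply]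
  have hvecMul : star v ᵥ* A = (starRingEnd ℂ μ) • star v := by
    rw [← hAH, ← star_mulVec, hvA]
    ext i
    simp
  -- c = q + ‖μ‖² c
  have hkey : c = q + (starRingEnd ℂ μ * μ) * c := by
    calc c = star v ⬝ᵥ (Qc + A * ηc * Aᵀ) *ᵥ v := by rw [hc, ← heqc]
    _ = q + star v ⬝ᵥ (A * ηc * Aᵀ) *ᵥ v := by
        rw [add_mulVec, dotProduct_add, hq]
    _ = q + (starRingEnd ℂ μ * μ) * c := by
        congr 1
        have : (A * ηc * Aᵀ) *ᵥ v = A *ᵥ (ηc *ᵥ (Aᵀ *ᵥ v)) := by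
          rw [mulVec_mulVec, mulVec_mulVec]
        rw [this, hvA, mulVec_smul, mulVec_smul, dotProduct_smul,
          dotProduct_mulVec, hvecMul, smul_dotProduct]
        rw [← hc, smul_smul, smul_eq_mul]
        ring
  -- real parts
  set x : Fin n → ℝ := fun i => (v i).re with hx
  set y : Fin n → ℝ := fun i => (v i).im with hy
  have hcre : c.re = x ⬝ᵥ η *ᵥ x + y ⬝ᵥ η *ᵥ y := quad_re_aux η v
  have hqre : q.re = x ⬝ᵥ Q *ᵥ x + y ⬝ᵥ Q *ᵥ y := quad_re_aux Q v
  have hc0 : 0 ≤ c.re := by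
    rw [hcre]
    have h1 := hη.dotProduct_mulVec_nonneg x
    have h2 := hη.dotProduct_mulVec_nonneg y
    simp only [star_trivial] at h1 h2
    linarith
  have hq0 : 0 < q.re := by
    rw [hqre]
    have hxy : x ≠ 0 ∨ y ≠ 0 := by
      by_contra h
      push_neg at h
      apply hv0
      ext i
      have h1 : x i = 0 := by rw [h.1]; rfl
      have h2 : y i = 0 := by rw [h.2]; rfl
      exact Complex.ext h1 h2
    rcases hxy with h | h
    · have h1 := hQ.dotProduct_mulVec_pos h
      have h2 := hQ.posSemidef.dotProduct_mulVec_nonneg y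
      simp only [star_trivial] at h1 h2
      linarith
    · have h1 := hQ.posSemidef.dotProduct_mulVec_nonneg x
      have h2 := hQ.dotProduct_mulVec_pos h
      simp only [star_trivial] at h1 h2
      linarith
  -- take real parts of the key equation
  have hnsq : starRingEnd ℂ μ * μ = (Complex.normSq μ : ℂ) := by
    rw [mul_comm, Complex.mul_conj]
  rw [hnsq] at hkey
  have hre : c.re = q.re + Complex.normSq μ * c.re := by
    have := congrArg Complex.re hkey
    simpa [Complex.add_re, Complex.mul_re] using this
  have hns1 : Complex.normSq μ < 1 := by nlinarith
  have habs : (‖μ‖) ^ 2 = Complex.normSq μ := Complex.sq_norm μ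
  nlinarith [norm_nonneg μ]
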